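/- Let A be an n×n real symmetric matrix, B an n×n real symmetric positive definite matrix, and u ∈ ℝⁿ a nonzero vector with uᵀABu ≠ 0. Define θ = (uᵀABu)/(uᵀB²u), θ̃ = (uᵀA²u)/(uᵀABu), and α = [uᵀA²u − uᵀB²u + √((uᵀA²u − uᵀB²u)² + 4(uᵀABu)²)]/(2uᵀABu). Then α satisfies the quadratic equation (uᵀABu)·α² + (uᵀB²u − uᵀA²u)·α − uᵀABu = 0 with α·(uᵀABu) > 0, and moreover θ ≤ α ≤ θ̃ if uᵀABu > 0, while θ̃ ≤ α ≤ θ if uᵀABu < 0. -/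

import Mathlib

open Matrix

/-!
For symmetric `A` and `B` write `a = ‖Au‖²`, `b = ‖Bu‖²`, `c = ⟪Au, Bu⟫`, so that
`uᵀA²u = a`, `uᵀB²u = b`, `uᵀABu = c`. Then `α` is the root of
`q(t) = c t² + (b - a) t - c` with the sign of `c`, and the other root is `-1/α`; hence for
`c > 0` and `t ≥ 0` the sign of `q(t)` is the sign of `t - α`. Cauchy–Schwarz `c² ≤ ab` gives
`q(c/b) = c (c² - ab) / b² ≤ 0` and `q(a/c) = (ab - c²) / c ≥ 0`, i.e. `θ ≤ α ≤ θ̃`.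
The case `c < 0` follows since `α` is odd in `c`.
-/

/-- The paper's `α`, with `a = uᵀA²u`, `b = uᵀB²u`, `c = uᵀABu`. -/
noncomputable def homRQ (a b c : ℝ) : ℝ :=
  (a - b + √((a - b) ^ 2 + 4 * c ^ 2)) / (2 * c)

lemma homRQ_neg (a b c : ℝ) : homRQ a b (-c) = -homRQ a b c := by
  rw [homRQ, homRQ, neg_sq, mul_neg, div_neg]

lemma abs_lt_sqrt_sq_add {x y : ℝ} (hy : 0 < y) : |x| < √(x ^ 2 + y) := by
  rw [Real.lt_sqrt (abs_nonneg _), sq_abs]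
  linarith

lemma homRQ_mul_pos {a b c : ℝ} (hc : c ≠ 0) : 0 < homRQ a b c * c := by
  have hs := abs_lt_sqrt_sq_add (x := a - b) (by positivity : 0 < 4 * c ^ 2)
  have hαc : homRQ a b c * c = (a - b + √((a - b) ^ 2 + 4 * c ^ 2)) / 2 := by
    rw [homRQ]; field_simp
  rw [hαc]
  linarith [neg_abs_le (a - b)]

lemma homRQ_quadratic {a b c : ℝ} (hc : c ≠ 0) :
    c * homRQ a b c ^ 2 + (b - a) * homRQ a b c - c = 0 := by
  have hs : √((a - b) ^ 2 + 4 * c ^ 2) ^ 2 = (a - b) ^ 2 + 4 * c ^ 2 :=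
    Real.sq_sqrt (by positivity)
  rw [homRQ]
  generalize √((a - b) ^ 2 + 4 * c ^ 2) = s at hs
  field_simp
  linear_combination hs

lemma quadratic_eq_mul_sub_homRQ {a b c : ℝ} (hc : c ≠ 0) (t : ℝ) :
    c * t ^ 2 + (b - a) * t - c = c * (t - homRQ a b c) * (t + (homRQ a b c)⁻¹) := by
  have hα : homRQ a b c ≠ 0 := left_ne_zero_of_mul (homRQ_mul_pos hc).ne'
  have hq := homRQ_quadratic (a := a) (b := b) hc
  field_simp
  linear_combination t * hq

lemma homRQ_pos {a b c : ℝ} (hc : 0 < c) : 0 < homRQ a b c :=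
  pos_of_mul_pos_left (homRQ_mul_pos hc.ne') hc.le

lemma mul_add_inv_homRQ_pos {a b c t : ℝ} (hc : 0 < c) (ht : 0 ≤ t) :
    0 < c * (t + (homRQ a b c)⁻¹) := by
  have := homRQ_pos (a := a) (b := b) hc
  positivity

lemma le_homRQ_iff {a b c t : ℝ} (hc : 0 < c) (ht : 0 ≤ t) :
    t ≤ homRQ a b c ↔ c * t ^ 2 + (b - a) * t - c ≤ 0 := by
  rw [quadratic_eq_mul_sub_homRQ hc.ne', mul_right_comm, ← neg_nonneg, ← mul_neg,
    mul_nonneg_iff_of_pos_left (mul_add_inv_homRQ_pos hc ht), neg_sub, sub_nonneg]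

lemma homRQ_le_iff {a b c t : ℝ} (hc : 0 < c) (ht : 0 ≤ t) :
    homRQ a b c ≤ t ↔ 0 ≤ c * t ^ 2 + (b - a) * t - c := by
  rw [quadratic_eq_mul_sub_homRQ hc.ne', mul_right_comm,
    mul_nonneg_iff_of_pos_left (mul_add_inv_homRQ_pos hc ht), sub_nonneg]

lemma div_le_homRQ {a b c : ℝ} (hb : 0 < b) (hcs : c ^ 2 ≤ a * b) (hc : 0 < c) :
    c / b ≤ homRQ a b c := by
  have hq : c * (c / b) ^ 2 + (b - a) * (c / b) - c = c * (c ^ 2 - a * b) / b ^ 2 := by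
    field_simp; ring
  rw [le_homRQ_iff hc (by positivity), hq]
  exact div_nonpos_of_nonpos_of_nonneg
    (mul_nonpos_of_nonneg_of_nonpos hc.le (sub_nonpos.2 hcs)) (sq_nonneg b)

lemma homRQ_le_div {a b c : ℝ} (ha : 0 ≤ a) (hcs : c ^ 2 ≤ a * b) (hc : 0 < c) :
    homRQ a b c ≤ a / c := by
  have hq : c * (a / c) ^ 2 + (b - a) * (a / c) - c = (a * b - c ^ 2) / c := by
    field_simp; ring
  rw [homRQ_le_iff hc (by positivity), hq]
  exact div_nonneg (sub_nonneg.2 hcs) hc.le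

lemma div_le_homRQ_of_neg {a b c : ℝ} (ha : 0 ≤ a) (hcs : c ^ 2 ≤ a * b) (hc : c < 0) :
    a / c ≤ homRQ a b c := by
  have h := homRQ_le_div ha (by rwa [neg_sq]) (neg_pos.2 hc)
  rwa [homRQ_neg, div_neg, neg_le_neg_iff] at h

lemma homRQ_le_div_of_neg {a b c : ℝ} (hb : 0 < b) (hcs : c ^ 2 ≤ a * b) (hc : c < 0) :
    homRQ a b c ≤ c / b := by
  have h := div_le_homRQ hb (by rwa [neg_sq]) (neg_pos.2 hc)
  rwa [homRQ_neg, neg_div, neg_le_neg_iff] at h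

lemma Matrix.IsSymm.dotProduct_mul_mulVec {R ι : Type*} [CommSemiring R] [Fintype ι]
    {M : Matrix ι ι R} (hM : M.IsSymm) (N : Matrix ι ι R) (u : ι → R) :
    u ⬝ᵥ (M * N) *ᵥ u = M *ᵥ u ⬝ᵥ N *ᵥ u := by
  rw [← mulVec_mulVec, dotProduct_mulVec, ← mulVec_transpose, hM.eq]

lemma Matrix.dotProduct_sq_le_mul {R ι : Type*} [CommRing R] [LinearOrder R]
    [IsStrictOrderedRing R] [Fintype ι] (v w : ι → R) :
    (v ⬝ᵥ w) ^ 2 ≤ (v ⬝ᵥ v) * (w ⬝ᵥ w) := by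
  simpa only [dotProduct, sq] using Finset.sum_mul_sq_le_sq_mul_sq Finset.univ v w

lemma Matrix.PosDef.dotProduct_mulVec_self_pos {ι : Type*} [Fintype ι] {B : Matrix ι ι ℝ}
    (hB : B.PosDef) {u : ι → ℝ} (hu : u ≠ 0) : 0 < B *ᵥ u ⬝ᵥ B *ᵥ u := by
  have hBu : B *ᵥ u ≠ 0 := fun h ↦ by
    simpa [h] using hB.dotProduct_mulVec_pos hu
  simpa using dotProduct_star_self_pos_iff.2 hBu

/-- For symmetric `A`, SPD `B`, and nonzero `u` with `uᵀABu ≠ 0`, the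
generalized homogeneous Rayleigh quotient `α` satisfies the quadratic equation
`(uᵀABu)α² + (uᵀB²u − uᵀA²u)α − uᵀABu = 0` with `α·(uᵀABu) > 0`, and lies between the
generalized Rayleigh quotient `θ = uᵀABu/uᵀB²u` and the generalized harmonic Rayleigh
quotient `θ̃ = uᵀA²u/uᵀABu`: `θ ≤ α ≤ θ̃` if `uᵀABu > 0`, `θ̃ ≤ α ≤ θ` if `uᵀABu < 0`. -/
theorem gen_homogeneous_rq_quadratic_and_between
    {n : ℕ} (A B : Matrix (Fin n) (Fin n) ℝ) (hA : A.IsSymm) (hB : B.PosDef)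
    (u : Fin n → ℝ) (hu : u ≠ 0) (huABu : u ⬝ᵥ (A * B).mulVec u ≠ 0)
    (θ θt α : ℝ)
    (hθ : θ = (u ⬝ᵥ (A * B).mulVec u) / (u ⬝ᵥ (B * B).mulVec u))
    (hθt : θt = (u ⬝ᵥ (A * A).mulVec u) / (u ⬝ᵥ (A * B).mulVec u))
    (hα : α = (u ⬝ᵥ (A * A).mulVec u - u ⬝ᵥ (B * B).mulVec u +
      Real.sqrt ((u ⬝ᵥ (A * A).mulVec u - u ⬝ᵥ (B * B).mulVec u)^2 +
        4 * (u ⬝ᵥ (A * B).mulVec u)^2)) / (2 * (u ⬝ᵥ (A * B).mulVec u))) :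
    (u ⬝ᵥ (A * B).mulVec u) * α^2 +
      (u ⬝ᵥ (B * B).mulVec u - u ⬝ᵥ (A * A).mulVec u) * α - u ⬝ᵥ (A * B).mulVec u = 0 ∧
    α * (u ⬝ᵥ (A * B).mulVec u) > 0 ∧
    (0 < u ⬝ᵥ (A * B).mulVec u → θ ≤ α ∧ α ≤ θt) ∧
    (u ⬝ᵥ (A * B).mulVec u < 0 → θt ≤ α ∧ α ≤ θ) := by
  have hBsymm : B.IsSymm := isHermitian_iff_isSymm.mp hB.1
  simp only [hA.dotProduct_mul_mulVec, hBsymm.dotProduct_mul_mulVec] at huABu hθ hθt hα ⊢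
  change α = homRQ _ _ _ at hα
  subst hθ hθt hα
  have ha : 0 ≤ A *ᵥ u ⬝ᵥ A *ᵥ u := by simpa using dotProduct_star_self_nonneg (A *ᵥ u)
  have hb := hB.dotProduct_mulVec_self_pos hu
  have hcs := dotProduct_sq_le_mul (A *ᵥ u) (B *ᵥ u)
  exact ⟨homRQ_quadratic huABu, homRQ_mul_pos huABu,
    fun hc ↦ ⟨div_le_homRQ hb hcs hc, homRQ_le_div ha hcs hc⟩,
    fun hc ↦ ⟨div_le_homRQ_of_neg ha hcs hc, homRQ_le_div_of_neg hb hcs hc⟩⟩
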